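/- Assume every bidder's valuation is monotone gross substitute. For every price vector p ∈ ℕ^m (with p_j ≥ 1 for all j in any under-demanded set), if there exists an under-demanded set at p (UD(p) ≠ ∅), then there exists a set in dearth demand at p (DD(p) ≠ ∅). -/
import Mathlib


/-- Utility of a bundle `S` at prices `p`: `v(S) - p(S)` (an integer). -/
def util {m : ℕ} (v : Finset (Fin m) → ℕ) (p : Fin m → ℕ) (S : Finset (Fin m)) : ℤ :=
  (v S : ℤ) - ∑ j ∈ S, (p j : ℤ)

/-- Demand collection: bundles of maximum utility at prices `p`. -/
def demand {m : ℕ} (v : Finset (Fin m) → ℕ) (p : Fin m → ℕ) : Finset (Finset (Fin m)) :=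
  Finset.univ.filter fun D => ∀ T : Finset (Fin m), util v p T ≤ util v p D

lemma demand_nonempty {m : ℕ} (v : Finset (Fin m) → ℕ) (p : Fin m → ℕ) :
    (demand v p).Nonempty := by
  obtain ⟨D, hD, hmax⟩ := Finset.exists_max_image (Finset.univ : Finset (Finset (Fin m)))
    (util v p) ⟨∅, Finset.mem_univ ∅⟩
  exact ⟨D, Finset.mem_filter.2 ⟨Finset.mem_univ D, fun T => hmax T (Finset.mem_univ T)⟩⟩

/-- Maximum utility of a bidder at prices `p`. -/
def uMax {m : ℕ} (v : Finset (Fin m) → ℕ) (p : Fin m → ℕ) : ℤ :=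
  Finset.univ.sup' Finset.univ_nonempty (util v p)

/-- A valuation is monotone with respect to inclusion. -/
def MonotoneVal {m : ℕ} (v : Finset (Fin m) → ℕ) : Prop :=
  ∀ ⦃S T : Finset (Fin m)⦄, S ⊆ T → v S ≤ v T

/-- Gross substitute: if `S` is demanded at `p` and `q ≥ p`, some demanded set at `q`
contains every item of `S` whose price did not change. -/
def GrossSub {m : ℕ} (v : Finset (Fin m) → ℕ) : Prop :=
  ∀ p q : Fin m → ℕ, p ≤ q → ∀ S ∈ demand v p,
    ∃ S' ∈ demand v q, ∀ j ∈ S, p j = q j → j ∈ S'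

/-- Requirement `l_p(S)` of a single bidder. -/
def req {m : ℕ} (v : Finset (Fin m) → ℕ) (p : Fin m → ℕ) (S : Finset (Fin m)) : ℕ :=
  (demand v p).inf' (demand_nonempty v p) fun D => (S ∩ D).card

/-- Redundant `h_p(S)` of a single bidder. -/
def red {m : ℕ} (v : Finset (Fin m) → ℕ) (p : Fin m → ℕ) (S : Finset (Fin m)) : ℕ :=
  (demand v p).sup' (demand_nonempty v p) fun D => (S ∩ D).card

/-- Auction requirement `l^p(S)`. -/
def reqAll {m n : ℕ} (v : Fin n → Finset (Fin m) → ℕ) (p : Fin m → ℕ) (S : Finset (Fin m)) : ℕ :=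
  ∑ i, req (v i) p S

/-- Auction redundant `h^p(S)`. -/
def redAll {m n : ℕ} (v : Fin n → Finset (Fin m) → ℕ) (p : Fin m → ℕ) (S : Finset (Fin m)) : ℕ :=
  ∑ i, red (v i) p S

/-- Lyapunov function `L(p) = Σ_i u_i(p) + Σ_j p_j`. -/
def lyap {m n : ℕ} (v : Fin n → Finset (Fin m) → ℕ) (p : Fin m → ℕ) : ℤ :=
  ∑ i, uMax (v i) p + ∑ j, (p j : ℤ)

/-- `p` is Walrasian: there is a partition of the items into demanded sets. -/
def IsWalrasian {m n : ℕ} (v : Fin n → Finset (Fin m) → ℕ) (p : Fin m → ℕ) : Prop :=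
  ∃ A : Fin n → Finset (Fin m),
    (∀ i j, i ≠ j → Disjoint (A i) (A j)) ∧
    Finset.univ.biUnion A = Finset.univ ∧
    ∀ i, A i ∈ demand (v i) p

/-- `p + 1_S`. -/
def incr {m : ℕ} (p : Fin m → ℕ) (S : Finset (Fin m)) : Fin m → ℕ :=
  fun j => if j ∈ S then p j + 1 else p j

/-- `p - 1_S`. -/
def decr {m : ℕ} (p : Fin m → ℕ) (S : Finset (Fin m)) : Fin m → ℕ :=
  fun j => if j ∈ S then p j - 1 else p j

/-- `S` is over-demanded at `p`: `l^p(S) > |S|`. -/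
def OverDemanded {m n : ℕ} (v : Fin n → Finset (Fin m) → ℕ) (p : Fin m → ℕ)
    (S : Finset (Fin m)) : Prop :=
  S.card < reqAll v p S

/-- `S` is weakly over-demanded at `p`: `l^p(S) ≥ |S|`. -/
def WeaklyOverDemanded {m n : ℕ} (v : Fin n → Finset (Fin m) → ℕ) (p : Fin m → ℕ)
    (S : Finset (Fin m)) : Prop :=
  S.card ≤ reqAll v p S

/-- `S` is under-demanded at `p`: `h^p(S) < |S|`. -/
def UnderDemanded {m n : ℕ} (v : Fin n → Finset (Fin m) → ℕ) (p : Fin m → ℕ)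
    (S : Finset (Fin m)) : Prop :=
  redAll v p S < S.card

/-- `S` is weakly under-demanded at `p`: `h^p(S) ≤ |S|`. -/
def WeaklyUnderDemanded {m n : ℕ} (v : Fin n → Finset (Fin m) → ℕ) (p : Fin m → ℕ)
    (S : Finset (Fin m)) : Prop :=
  redAll v p S ≤ S.card

/-- `S ∈ ED(p)`: `S` is over-demanded at `p` and no nonempty `T ⊆ S` is weakly
under-demanded at `p + 1_S`. -/
def ExcessDemand {m n : ℕ} (v : Fin n → Finset (Fin m) → ℕ) (p : Fin m → ℕ)
    (S : Finset (Fin m)) : Prop :=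
  OverDemanded v p S ∧
    ∀ T ⊆ S, T ≠ ∅ → ¬ WeaklyUnderDemanded v (incr p S) T

/-- `S ∈ DD(p)`: `S` is under-demanded at `p` and no nonempty `T ⊆ S` is weakly
over-demanded at `p - 1_S`. -/
def DearthDemand {m n : ℕ} (v : Fin n → Finset (Fin m) → ℕ) (p : Fin m → ℕ)
    (S : Finset (Fin m)) : Prop :=
  UnderDemanded v p S ∧
    ∀ T ⊆ S, T ≠ ∅ → ¬ WeaklyOverDemanded v (decr p S) T

/-- `S` is a minimal minimizer for `p`. -/
def MinimalMinimizer {m n : ℕ} (v : Fin n → Finset (Fin m) → ℕ) (p : Fin m → ℕ)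
    (S : Finset (Fin m)) : Prop :=
  lyap v (incr p S) < lyap v p ∧
    (∀ T : Finset (Fin m), lyap v (incr p S) ≤ lyap v (incr p T)) ∧
    ∀ T : Finset (Fin m), T ⊂ S → lyap v (incr p S) < lyap v (incr p T)

/-- `S` is a maximal minimizer for `p`. -/
def MaximalMinimizer {m n : ℕ} (v : Fin n → Finset (Fin m) → ℕ) (p : Fin m → ℕ)
    (S : Finset (Fin m)) : Prop :=
  lyap v (decr p S) < lyap v p ∧
    (∀ T : Finset (Fin m), lyap v (decr p S) ≤ lyap v (decr p T)) ∧
    ∀ T : Finset (Fin m), T ⊂ S → lyap v (decr p S) < lyap v (decr p T)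
section Aux
open Finset

variable {m : ℕ} {v : Finset (Fin m) → ℕ}

lemma util_le_uMax (p : Fin m → ℕ) (T : Finset (Fin m)) : util v p T ≤ uMax v p :=
  Finset.le_sup' _ (Finset.mem_univ T)

lemma uMax_le {p : Fin m → ℕ} {c : ℤ} (h : ∀ T, util v p T ≤ c) : uMax v p ≤ c :=
  Finset.sup'_le _ _ fun T _ => h T

lemma mem_demand {p : Fin m → ℕ} {D : Finset (Fin m)} :
    D ∈ demand v p ↔ ∀ T, util v p T ≤ util v p D := by
  simp [demand]

lemma mem_demand_iff_eq {p : Fin m → ℕ} {D : Finset (Fin m)} :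
    D ∈ demand v p ↔ util v p D = uMax v p := by
  constructor
  · intro h
    exact le_antisymm (util_le_uMax p D) (uMax_le (mem_demand.1 h))
  · intro h
    exact mem_demand.2 fun T => h ▸ util_le_uMax p T

lemma uMax_eq_of_mem {p : Fin m → ℕ} {D : Finset (Fin m)} (h : D ∈ demand v p) :
    uMax v p = util v p D := (mem_demand_iff_eq.1 h).symm

lemma sum_indicator_card (S X : Finset (Fin m)) :
    ∑ j ∈ X, (if j ∈ S then (1 : ℤ) else 0) = ((X ∩ S).card : ℤ) := by
  rw [Finset.sum_boole, Finset.filter_mem_eq_inter]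

lemma util_incr (p : Fin m → ℕ) (T X : Finset (Fin m)) :
    util v (incr p T) X = util v p X - ((X ∩ T).card : ℤ) := by
  unfold util incr
  have h : ∀ j ∈ X, ((if j ∈ T then p j + 1 else p j : ℕ) : ℤ)
      = (p j : ℤ) + (if j ∈ T then (1:ℤ) else 0) := by
    intro j _; split <;> push_cast <;> ring
  rw [Finset.sum_congr rfl h, Finset.sum_add_distrib, sum_indicator_card]
  ring

lemma util_decr (p : Fin m → ℕ) {S : Finset (Fin m)} (hS : ∀ j ∈ S, 1 ≤ p j)
    (X : Finset (Fin m)) :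
    util v (decr p S) X = util v p X + ((X ∩ S).card : ℤ) := by
  unfold util decr
  have h : ∀ j ∈ X, ((if j ∈ S then p j - 1 else p j : ℕ) : ℤ)
      = (p j : ℤ) - (if j ∈ S then (1:ℤ) else 0) := by
    intro j _
    split
    · next hj => rw [Nat.cast_sub (hS j hj)]; simp
    · simp
  rw [Finset.sum_congr rfl h, Finset.sum_sub_distrib, sum_indicator_card]
  ring

lemma incr_decr {p : Fin m → ℕ} {S : Finset (Fin m)} (hS : ∀ j ∈ S, 1 ≤ p j) :
    incr (decr p S) S = p := by
  funext j
  unfold incr decr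
  by_cases hj : j ∈ S <;> simp [hj]
  exact Nat.sub_add_cancel (hS j hj)

lemma incr_empty (p : Fin m → ℕ) : incr p ∅ = p := by
  funext j; simp [incr]

lemma incr_incr {q : Fin m → ℕ} {R : Finset (Fin m)} {k : Fin m} (hk : k ∉ R) :
    incr (incr q R) {k} = incr q (insert k R) := by
  funext j
  unfold incr
  by_cases h1 : j = k
  · subst h1; simp [hk]
  · by_cases h2 : j ∈ R <;> simp [h1, h2]

lemma uMax_incr_le (p : Fin m → ℕ) (T : Finset (Fin m)) :
    uMax v (incr p T) ≤ uMax v p := by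
  apply uMax_le
  intro X
  rw [util_incr]
  have := util_le_uMax (v := v) p X
  have : (0:ℤ) ≤ ((X ∩ T).card : ℤ) := Int.ofNat_nonneg _
  omega

lemma exists_req (p : Fin m → ℕ) (S : Finset (Fin m)) :
    ∃ D ∈ demand v p, (S ∩ D).card = req v p S := by
  obtain ⟨D, hD, hEq⟩ := Finset.exists_mem_eq_inf' (demand_nonempty v p)
    (fun D => (S ∩ D).card)
  exact ⟨D, hD, hEq.symm⟩

lemma req_le {p : Fin m → ℕ} {S D : Finset (Fin m)} (hD : D ∈ demand v p) :
    req v p S ≤ (S ∩ D).card := by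
  unfold req; exact Finset.inf'_le _ hD

lemma exists_red (p : Fin m → ℕ) (S : Finset (Fin m)) :
    ∃ D ∈ demand v p, (S ∩ D).card = red v p S := by
  obtain ⟨D, hD, hEq⟩ := Finset.exists_mem_eq_sup' (demand_nonempty v p)
    (fun D => (S ∩ D).card)
  exact ⟨D, hD, hEq.symm⟩

lemma le_red {p : Fin m → ℕ} {S D : Finset (Fin m)} (hD : D ∈ demand v p) :
    (S ∩ D).card ≤ red v p S := by
  unfold red; exact Finset.le_sup' (fun D => (S ∩ D).card) hD

end Aux
section Aux2
open Finset

variable {m : ℕ} {v : Finset (Fin m) → ℕ}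

lemma card_inter_singleton (X : Finset (Fin m)) (j : Fin m) :
    (((X ∩ {j}).card : ℕ) : ℤ) = if j ∈ X then 1 else 0 := by
  by_cases h : j ∈ X
  · rw [if_pos h]
    have : X ∩ {j} = {j} := by
      apply Finset.Subset.antisymm (Finset.inter_subset_right)
      intro x hx
      rw [Finset.mem_singleton] at hx
      rw [hx]
      exact Finset.mem_inter.2 ⟨h, Finset.mem_singleton_self j⟩
    rw [this]; simp
  · rw [if_neg h]
    have : X ∩ {j} = ∅ := by
      apply Finset.eq_empty_of_forall_notMem
      intro x hx
      obtain ⟨h1, h2⟩ := Finset.mem_inter.1 hx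
      rw [Finset.mem_singleton] at h2
      exact h (h2 ▸ h1)
    rw [this]; simp

lemma util_incr_single (q : Fin m → ℕ) (j : Fin m) (X : Finset (Fin m)) :
    util v (incr q {j}) X = util v q X - (if j ∈ X then 1 else 0) := by
  rw [util_incr, card_inter_singleton]

lemma uMax_incr_single_required {q : Fin m → ℕ} {j : Fin m}
    (hj : ∀ D ∈ demand v q, j ∈ D) :
    uMax v (incr q {j}) = uMax v q - 1 := by
  apply le_antisymm
  · apply uMax_le
    intro X
    rw [util_incr_single]
    have h1 := util_le_uMax (v := v) q X
    by_cases hX : j ∈ X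
    · rw [if_pos hX]; omega
    · rw [if_neg hX, sub_zero]
      have h2 : util v q X ≠ uMax v q := fun he => hX (hj X (mem_demand_iff_eq.2 he))
      omega
  · obtain ⟨D, hD⟩ := demand_nonempty v q
    have h3 := util_le_uMax (v := v) (incr q {j}) D
    rw [util_incr_single, mem_demand_iff_eq.1 hD, if_pos (hj D hD)] at h3
    exact h3

lemma uMax_incr_single_unreq {q : Fin m → ℕ} {j : Fin m} {D₀ : Finset (Fin m)}
    (hD₀ : D₀ ∈ demand v q) (hj : j ∉ D₀) :
    uMax v (incr q {j}) = uMax v q := by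
  apply le_antisymm (uMax_incr_le q {j})
  have h := util_le_uMax (v := v) (incr q {j}) D₀
  rw [util_incr_single, if_neg hj, sub_zero, mem_demand_iff_eq.1 hD₀] at h
  exact h

lemma demand_incr_single_unreq {q : Fin m → ℕ} {j : Fin m} {D₀ : Finset (Fin m)}
    (hD₀ : D₀ ∈ demand v q) (hj : j ∉ D₀) :
    ∀ E ∈ demand v (incr q {j}), E ∈ demand v q ∧ j ∉ E := by
  intro E hE
  have hu := mem_demand_iff_eq.1 hE
  rw [util_incr_single, uMax_incr_single_unreq hD₀ hj] at hu
  have hle := util_le_uMax (v := v) q E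
  by_cases hjE : j ∈ E
  · exfalso; rw [if_pos hjE] at hu; omega
  · rw [if_neg hjE, sub_zero] at hu
    exact ⟨mem_demand_iff_eq.2 hu, hjE⟩

lemma core_lemma (hgs : GrossSub v) {q : Fin m → ℕ} {j k : Fin m} (hjk : j ≠ k)
    (hj : ∀ D ∈ demand v q, j ∈ D) (hk : ∀ D ∈ demand v q, k ∈ D)
    {X : Finset (Fin m)} (hjX : j ∉ X) (hkX : k ∉ X) :
    util v q X ≤ uMax v q - 2 := by
  by_contra hcon
  push_neg at hcon
  have hle := util_le_uMax (v := v) q X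
  have hXne : util v q X ≠ uMax v q := fun he => hjX (hj X (mem_demand_iff_eq.2 he))
  have hXval : util v q X = uMax v q - 1 := by omega
  have hup₁ : uMax v (incr q {j}) = uMax v q - 1 := uMax_incr_single_required hj
  have hq₂util : ∀ Y, util v (incr (incr q {j}) {k}) Y
      = util v q Y - (if j ∈ Y then 1 else 0) - (if k ∈ Y then 1 else 0) := by
    intro Y
    rw [util_incr_single, util_incr_single]
  have hq₂le : ∀ Y, util v (incr (incr q {j}) {k}) Y ≤ uMax v q - 1 ∧
      (util v (incr (incr q {j}) {k}) Y = uMax v q - 1 → j ∉ Y) := by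
    intro Y
    have h1 := util_le_uMax (v := v) q Y
    rw [hq₂util]
    have hb : (0:ℤ) ≤ (if k ∈ Y then (1:ℤ) else 0) := by split <;> norm_num
    by_cases hjY : j ∈ Y
    · rw [if_pos hjY]
      by_cases hYd : util v q Y = uMax v q
      · have hkY : k ∈ Y := hk Y (mem_demand_iff_eq.2 hYd)
        rw [if_pos hkY]
        exact ⟨by omega, fun hc => False.elim (by omega)⟩
      · exact ⟨by omega, fun hc => False.elim (by omega)⟩
    · rw [if_neg hjY]
      refine ⟨?_, fun _ => hjY⟩
      by_cases hYd : util v q Y = uMax v q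
      · have hkY : k ∈ Y := hk Y (mem_demand_iff_eq.2 hYd)
        rw [if_pos hkY]; omega
      · omega
  have huq₂ : uMax v (incr (incr q {j}) {k}) = uMax v q - 1 := by
    apply le_antisymm (uMax_le fun Y => (hq₂le Y).1)
    have hX2 : util v (incr (incr q {j}) {k}) X = uMax v q - 1 := by
      rw [hq₂util, if_neg hjX, if_neg hkX, hXval]; ring
    exact hX2 ▸ util_le_uMax _ X
  obtain ⟨D, hD⟩ := demand_nonempty v q
  have hDp₁ : D ∈ demand v (incr q {j}) := by
    apply mem_demand_iff_eq.2
    rw [util_incr_single, if_pos (hj D hD), mem_demand_iff_eq.1 hD, hup₁]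
  have hle12 : incr q {j} ≤ incr (incr q {j}) {k} := by
    intro i
    show incr q {j} i ≤ if i ∈ ({k} : Finset (Fin m)) then incr q {j} i + 1 else incr q {j} i
    split
    · exact Nat.le_succ _
    · exact le_rfl
  obtain ⟨F, hF, hkeep⟩ := hgs _ _ hle12 D hDp₁
  have hjknotmem : j ∉ ({k} : Finset (Fin m)) := by simp [hjk]
  have hgoal : incr (incr q {j}) {k} j = incr q {j} j := by
    show (if j ∈ ({k} : Finset (Fin m)) then incr q {j} j + 1 else incr q {j} j) = incr q {j} j
    rw [if_neg hjknotmem]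
  have hjF : j ∈ F := hkeep j (hj D hD) hgoal.symm
  have hFval : util v (incr (incr q {j}) {k}) F = uMax v q - 1 := by
    rw [mem_demand_iff_eq.1 hF, huq₂]
  exact (hq₂le F).2 hFval hjF

lemma atom (hgs : GrossSub v) {q : Fin m → ℕ} {j k : Fin m} (hjk : j ≠ k)
    (hk : ∀ D ∈ demand v q, k ∈ D) :
    ∀ E ∈ demand v (incr q {j}), k ∈ E := by
  intro E hE
  by_cases h0 : ∀ D ∈ demand v q, j ∈ D
  · have hup := uMax_incr_single_required (v := v) h0
    have hEu : util v (incr q {j}) E = uMax v q - 1 := by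
      rw [mem_demand_iff_eq.1 hE, hup]
    rw [util_incr_single] at hEu
    by_cases hjE : j ∈ E
    · rw [if_pos hjE] at hEu
      have : util v q E = uMax v q := by omega
      exact hk E (mem_demand_iff_eq.2 this)
    · rw [if_neg hjE, sub_zero] at hEu
      by_contra hkE
      have := core_lemma hgs hjk h0 hk hjE hkE
      omega
  · push_neg at h0
    obtain ⟨D₀, hD₀, hjD₀⟩ := h0
    exact hk E (demand_incr_single_unreq hD₀ hjD₀ E hE).1

end Aux2
section Aux3
open Finset

variable {m : ℕ} {v : Finset (Fin m) → ℕ}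

lemma rc_aux (hgs : GrossSub v) {q : Fin m → ℕ} {T : Finset (Fin m)}
    (hT : ∀ D ∈ demand v q, T ⊆ D) :
    ∀ R : Finset (Fin m), R ⊆ T →
      (∀ D ∈ demand v (incr q R), ∀ k ∈ T, k ∉ R → k ∈ D) ∧
      uMax v (incr q R) ≤ uMax v q - (R.card : ℤ) := by
  intro R
  induction R using Finset.induction_on with
  | empty =>
    intro _
    rw [incr_empty]
    exact ⟨fun D hD k hk _ => hT D hD hk, by simp⟩
  | @insert k' R hk'R ih =>
    intro hsub
    have hRsub : R ⊆ T := (Finset.subset_insert k' R).trans hsub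
    obtain ⟨ihmem, ihle⟩ := ih hRsub
    have hk'T : k' ∈ T := hsub (Finset.mem_insert_self k' R)
    have hreq : ∀ D ∈ demand v (incr q R), k' ∈ D := fun D hD => ihmem D hD k' hk'T hk'R
    rw [← incr_incr hk'R]
    constructor
    · intro D hD k hkT hkR
      have hkne : k' ≠ k := fun he => hkR (he ▸ Finset.mem_insert_self k' R)
      have hkRnot : k ∉ R := fun hh => hkR (Finset.mem_insert_of_mem hh)
      exact atom hgs hkne (fun D' hD' => ihmem D' hD' k hkT hkRnot) D hD
    · have h1 : uMax v (incr (incr q R) {k'}) = uMax v (incr q R) - 1 :=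
        uMax_incr_single_required hreq
      rw [h1, Finset.card_insert_of_notMem hk'R]
      push_cast
      omega

lemma rc (hgs : GrossSub v) {q : Fin m → ℕ} {T : Finset (Fin m)}
    (hT : ∀ D ∈ demand v q, T ⊆ D) (X : Finset (Fin m)) :
    util v q X ≤ uMax v q - ((T \ X).card : ℤ) := by
  have h := (rc_aux hgs hT (T \ X) Finset.sdiff_subset).2
  have h2 : util v (incr q (T \ X)) X = util v q X := by
    rw [util_incr]
    have hXe : X ∩ (T \ X) = ∅ := by
      apply Finset.eq_empty_of_forall_notMem
      intro x hx
      obtain ⟨h1, h2⟩ := Finset.mem_inter.1 hx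
      exact (Finset.mem_sdiff.1 h2).2 h1
    rw [hXe]
    simp
  have h3 := util_le_uMax (v := v) (incr q (T \ X)) X
  rw [h2] at h3
  exact h3.trans h

lemma uMax_incr_eq (hgs : GrossSub v) :
    ∀ T : Finset (Fin m), ∀ q, uMax v (incr q T) = uMax v q - (req v q T : ℤ) := by
  intro T
  induction T using Finset.strongInduction with
  | _ T ih =>
  intro q
  have hge : uMax v q - (req v q T : ℤ) ≤ uMax v (incr q T) := by
    obtain ⟨D, hD, hcard⟩ := exists_req q T
    have h1 := util_le_uMax (v := v) (incr q T) D
    rw [util_incr] at h1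
    rw [uMax_eq_of_mem hD]
    have hc : ((D ∩ T).card : ℤ) = (req v q T : ℤ) := by
      rw [Finset.inter_comm]
      exact_mod_cast congrArg (Nat.cast : ℕ → ℤ) hcard
    omega
  apply le_antisymm ?_ hge
  by_cases hall : ∀ D ∈ demand v q, T ⊆ D
  · have hreqT : req v q T = T.card := by
      apply le_antisymm
      · obtain ⟨D, hD⟩ := demand_nonempty v q
        have h2 := req_le (S := T) hD
        rwa [Finset.inter_eq_left.2 (hall D hD)] at h2
      · unfold req
        apply Finset.le_inf'
        intro D hD
        rw [Finset.inter_eq_left.2 (hall D hD)]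
    apply uMax_le
    intro X
    rw [util_incr, hreqT]
    have hrc := rc hgs hall X
    have hcards : ((X ∩ T).card : ℤ) + ((T \ X).card : ℤ) = (T.card : ℤ) := by
      rw [Finset.inter_comm]
      exact_mod_cast congrArg (Nat.cast : ℕ → ℤ) (Finset.card_inter_add_card_sdiff T X)
    omega
  · push_neg at hall
    obtain ⟨D₀, hD₀, hnsub⟩ := hall
    obtain ⟨j, hjT, hjD₀⟩ := Finset.not_subset.1 hnsub
    have hTj : T \ {j} ⊂ T :=
      Finset.sdiff_ssubset (Finset.singleton_subset_iff.2 hjT) (Finset.singleton_nonempty j)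
    have hcomp : incr q T = incr (incr q {j}) (T \ {j}) := by
      funext i
      unfold incr
      by_cases h1 : i = j
      · subst h1; simp [hjT]
      · by_cases h2 : i ∈ T <;> simp [h1, h2]
    rw [hcomp, ih (T \ {j}) hTj (incr q {j}), uMax_incr_single_unreq hD₀ hjD₀]
    have hmono : req v q T ≤ req v (incr q {j}) (T \ {j}) := by
      obtain ⟨D', hD', hcard'⟩ := exists_req (incr q {j}) (T \ {j})
      obtain ⟨hD'q, hjD'⟩ := demand_incr_single_unreq hD₀ hjD₀ D' hD'
      have h5 := req_le (S := T) hD'q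
      have heq : T ∩ D' = (T \ {j}) ∩ D' := by
        ext x
        simp only [Finset.mem_inter, Finset.mem_sdiff, Finset.mem_singleton]
        constructor
        · rintro ⟨hxT, hxD⟩
          exact ⟨⟨hxT, fun he => hjD' (he ▸ hxD)⟩, hxD⟩
        · rintro ⟨⟨hxT, _⟩, hxD⟩
          exact ⟨hxT, hxD⟩
      rw [heq, hcard'] at h5
      exact h5
    omega

lemma uMax_decr_eq (hgs : GrossSub v) {p : Fin m → ℕ} {S : Finset (Fin m)}
    (hS : ∀ j ∈ S, 1 ≤ p j) :
    uMax v (decr p S) = uMax v p + (req v (decr p S) S : ℤ) := by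
  have h := uMax_incr_eq hgs S (decr p S)
  rw [incr_decr hS] at h
  omega

lemma req_decr_le_red (hgs : GrossSub v) {p : Fin m → ℕ} {S : Finset (Fin m)}
    (hS : ∀ j ∈ S, 1 ≤ p j) :
    req v (decr p S) S ≤ red v p S := by
  obtain ⟨D, hD, hcard⟩ := exists_req (decr p S) S
  have hDp : D ∈ demand v p := by
    apply mem_demand_iff_eq.2
    have h1 := util_decr (v := v) p hS D
    have h2 := uMax_eq_of_mem hD
    have h3 := uMax_decr_eq hgs hS
    have hco : ((D ∩ S).card : ℤ) = ((S ∩ D).card : ℤ) := by rw [Finset.inter_comm]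
    have hcast : ((S ∩ D).card : ℤ) = (req v (decr p S) S : ℤ) :=
      congrArg (Nat.cast : ℕ → ℤ) hcard
    omega
  have h6 := le_red (S := S) hDp
  omega

lemma uMax_decr_le_red (hgs : GrossSub v) {p : Fin m → ℕ} {S : Finset (Fin m)}
    (hS : ∀ j ∈ S, 1 ≤ p j) :
    uMax v (decr p S) ≤ uMax v p + (red v p S : ℤ) := by
  have h1 := uMax_decr_eq hgs hS
  have h2 := req_decr_le_red hgs hS
  have h3 : ((req v (decr p S) S : ℕ) : ℤ) ≤ ((red v p S : ℕ) : ℤ) := by exact_mod_cast h2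
  omega

lemma uMax_decr_ge_red {p : Fin m → ℕ} {S : Finset (Fin m)}
    (hS : ∀ j ∈ S, 1 ≤ p j) :
    uMax v p + (red v p S : ℤ) ≤ uMax v (decr p S) := by
  obtain ⟨D, hD, hcard⟩ := exists_red (v := v) p S
  have h1 := util_le_uMax (v := v) (decr p S) D
  rw [util_decr p hS] at h1
  have h2 := uMax_eq_of_mem hD
  have hco : ((D ∩ S).card : ℤ) = ((S ∩ D).card : ℤ) := by rw [Finset.inter_comm]
  have hcast : ((S ∩ D).card : ℤ) = (red v p S : ℤ) := congrArg (Nat.cast : ℕ → ℤ) hcard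
  omega

end Aux3
section Aux4
open Finset

variable {m : ℕ}

lemma sum_decr_int {p : Fin m → ℕ} {S : Finset (Fin m)} (hS : ∀ j ∈ S, 1 ≤ p j) :
    ∑ j : Fin m, ((decr p S j : ℕ) : ℤ) = ∑ j : Fin m, (p j : ℤ) - (S.card : ℤ) := by
  have h : ∀ j ∈ (Finset.univ : Finset (Fin m)),
      ((decr p S j : ℕ) : ℤ) = (p j : ℤ) - (if j ∈ S then (1:ℤ) else 0) := by
    intro j _
    unfold decr
    split
    · next hj => rw [Nat.cast_sub (hS j hj)]; simp
    · simp
  rw [Finset.sum_congr rfl h, Finset.sum_sub_distrib, sum_indicator_card, Finset.univ_inter]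

lemma sum_incr_int (q : Fin m → ℕ) (T : Finset (Fin m)) :
    ∑ j : Fin m, ((incr q T j : ℕ) : ℤ) = ∑ j : Fin m, (q j : ℤ) + (T.card : ℤ) := by
  have h : ∀ j ∈ (Finset.univ : Finset (Fin m)),
      ((incr q T j : ℕ) : ℤ) = (q j : ℤ) + (if j ∈ T then (1:ℤ) else 0) := by
    intro j _
    unfold incr
    split <;> push_cast <;> ring
  rw [Finset.sum_congr rfl h, Finset.sum_add_distrib, sum_indicator_card, Finset.univ_inter]

end Aux4

theorem stmt15 {m n : ℕ} (v : Fin n → Finset (Fin m) → ℕ)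
    (hzero : ∀ i, v i ∅ = 0) (hmono : ∀ i, MonotoneVal (v i))
    (hgs : ∀ i, GrossSub (v i))
    (p : Fin m → ℕ)
    (hpos : ∀ S : Finset (Fin m), UnderDemanded v p S → ∀ j ∈ S, 1 ≤ p j)
    (h : ∃ S : Finset (Fin m), UnderDemanded v p S) :
    ∃ S : Finset (Fin m), DearthDemand v p S := by
  classical
  obtain ⟨S₀, hS₀⟩ := h
  set Φ : Finset (Fin m) → ℤ := fun S => lyap v (decr p S) with hΦ
  set F : Finset (Finset (Fin m)) := Finset.univ.filter (fun S => ∀ j ∈ S, 1 ≤ p j) with hF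
  have hS₀F : S₀ ∈ F := Finset.mem_filter.2 ⟨Finset.mem_univ _, hpos S₀ hS₀⟩
  obtain ⟨S₁, hS₁F, hS₁min⟩ := F.exists_min_image Φ ⟨S₀, hS₀F⟩
  set F' : Finset (Finset (Fin m)) := F.filter (fun S => Φ S ≤ Φ S₁) with hF'
  have hS₁F' : S₁ ∈ F' := Finset.mem_filter.2 ⟨hS₁F, le_refl _⟩
  obtain ⟨S, hSF', hScard⟩ := F'.exists_min_image (fun S => S.card) ⟨S₁, hS₁F'⟩
  have hSF : S ∈ F := (Finset.mem_filter.1 hSF').1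
  have hSpos : ∀ j ∈ S, 1 ≤ p j := (Finset.mem_filter.1 hSF).2
  have hSmin : ∀ S' ∈ F, Φ S ≤ Φ S' :=
    fun S' hS' => le_trans (Finset.mem_filter.1 hSF').2 (hS₁min S' hS')
  -- upper bound for Φ on members of F
  have key_ub : ∀ S' : Finset (Fin m), (∀ j ∈ S', 1 ≤ p j) →
      Φ S' ≤ lyap v p + (redAll v p S' : ℤ) - (S'.card : ℤ) := by
    intro S' hp'
    have hsum1 : ∑ i, uMax (v i) (decr p S') ≤
        ∑ i, (uMax (v i) p + (red (v i) p S' : ℤ)) :=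
      Finset.sum_le_sum fun i _ => uMax_decr_le_red (hgs i) hp'
    rw [Finset.sum_add_distrib] at hsum1
    have hred : (redAll v p S' : ℤ) = ∑ i, (red (v i) p S' : ℤ) := by
      unfold redAll; push_cast; rfl
    have hΦval : Φ S' = ∑ i, uMax (v i) (decr p S') + (∑ j, (p j : ℤ) - (S'.card : ℤ)) := by
      show lyap v (decr p S') = _
      unfold lyap
      rw [sum_decr_int hp']
    rw [hΦval, hred]
    unfold lyap
    linarith
  -- lower bound for Φ on members of F
  have key_lb : ∀ S' : Finset (Fin m), (∀ j ∈ S', 1 ≤ p j) →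
      lyap v p + (redAll v p S' : ℤ) - (S'.card : ℤ) ≤ Φ S' := by
    intro S' hp'
    have hsum1 : ∑ i, (uMax (v i) p + (red (v i) p S' : ℤ)) ≤
        ∑ i, uMax (v i) (decr p S') :=
      Finset.sum_le_sum fun i _ => uMax_decr_ge_red hp'
    rw [Finset.sum_add_distrib] at hsum1
    have hred : (redAll v p S' : ℤ) = ∑ i, (red (v i) p S' : ℤ) := by
      unfold redAll; push_cast; rfl
    have hΦval : Φ S' = ∑ i, uMax (v i) (decr p S') + (∑ j, (p j : ℤ) - (S'.card : ℤ)) := by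
      show lyap v (decr p S') = _
      unfold lyap
      rw [sum_decr_int hp']
    rw [hΦval, hred]
    unfold lyap
    linarith
  -- Φ S < lyap v p
  have hstrict : Φ S < lyap v p := by
    have h1 := key_ub S₀ (hpos S₀ hS₀)
    have h2 : (redAll v p S₀ : ℤ) < (S₀.card : ℤ) := by exact_mod_cast hS₀
    have h3 := hSmin S₀ hS₀F
    linarith
  -- S is under-demanded at p
  have hUD : UnderDemanded v p S := by
    have h1 := key_lb S hSpos
    have h2 : (redAll v p S : ℤ) < (S.card : ℤ) := by linarith
    exact_mod_cast h2
  refine ⟨S, hUD, ?_⟩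
  intro T hTS hTne hwod
  -- hwod : T.card ≤ reqAll v (decr p S) T
  have hwod' : (T.card : ℤ) ≤ (reqAll v (decr p S) T : ℤ) := by exact_mod_cast hwod
  -- lyap at incr (decr p S) T
  have hsum2 : ∑ i, uMax (v i) (incr (decr p S) T) =
      ∑ i, uMax (v i) (decr p S) - ∑ i, (req (v i) (decr p S) T : ℤ) := by
    rw [← Finset.sum_sub_distrib]
    exact Finset.sum_congr rfl fun i _ => uMax_incr_eq (hgs i) T (decr p S)
  have hreqc : (reqAll v (decr p S) T : ℤ) = ∑ i, (req (v i) (decr p S) T : ℤ) := by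
    unfold reqAll; push_cast; rfl
  have hlyap2 : lyap v (incr (decr p S) T) ≤ Φ S := by
    show _ ≤ lyap v (decr p S)
    unfold lyap
    rw [hsum2, sum_incr_int]
    rw [hreqc] at hwod'
    linarith
  -- incr (decr p S) T = decr p (S \ T)
  have heqset : incr (decr p S) T = decr p (S \ T) := by
    funext i
    unfold incr decr
    by_cases h1 : i ∈ T
    · have hiS : i ∈ S := hTS h1
      have h2 : i ∉ S \ T := fun hc => (Finset.mem_sdiff.1 hc).2 h1
      rw [if_pos h1, if_pos hiS, if_neg h2]
      exact Nat.sub_add_cancel (hSpos i hiS)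
    · rw [if_neg h1]
      by_cases h3 : i ∈ S
      · have h4 : i ∈ S \ T := Finset.mem_sdiff.2 ⟨h3, h1⟩
        rw [if_pos h3, if_pos h4]
      · have h4 : i ∉ S \ T := fun hc => h3 (Finset.mem_sdiff.1 hc).1
        rw [if_neg h3, if_neg h4]
  rw [heqset] at hlyap2
  -- S \ T belongs to F'
  have hSTF : S \ T ∈ F := Finset.mem_filter.2
    ⟨Finset.mem_univ _, fun j hj => hSpos j (Finset.mem_sdiff.1 hj).1⟩
  have hSTF' : S \ T ∈ F' := Finset.mem_filter.2
    ⟨hSTF, le_trans hlyap2 (Finset.mem_filter.1 hSF').2⟩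
  have hcardle := hScard (S \ T) hSTF'
  have hTpos : 0 < T.card := Finset.card_pos.2 (Finset.nonempty_iff_ne_empty.2 hTne)
  have hTcard : T.card ≤ S.card := Finset.card_le_card hTS
  have hsd : (S \ T).card = S.card - T.card := Finset.card_sdiff_of_subset hTS
  omega
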